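/- arXiv:2404.04063 — 2 statements merged into one kernel-verified Lean document; each statement's English description precedes it below -/
import Mathlib

section
/- Let λ > 0, let f : ℝ^n → ℝ^N be differentiable at a point x with ‖f(x)‖ ≠ λ. Then the composition S_λ ∘ f is differentiable at x and, with G = Df(x) and H = D(S_λ ∘ f)(x), one has ‖H‖_F² ≤ ⟪G, H⟫_F ≤ ‖G‖_F². -/
open RealInnerProductSpace

/-- The shortening operator `S_λ` on `ℝ^N`:
`S_λ a = 0` if `‖a‖ ≤ λ`, and `S_λ a = (‖a‖ − λ) a / ‖a‖` if `‖a‖ > λ`. -/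
noncomputable def shorten {N : ℕ} (lam : ℝ) (a : EuclideanSpace ℝ (Fin N)) :
    EuclideanSpace ℝ (Fin N) :=
  if ‖a‖ ≤ lam then 0 else ((‖a‖ - lam) / ‖a‖) • a

/-- The Frobenius inner product `⟪A, B⟫_F = ∑ i ⟨A eᵢ, B eᵢ⟩` of two linear maps
`ℝ^n → ℝ^N`, where `(eᵢ)` is the standard basis of `ℝ^n`. -/
noncomputable def frobInner {n N : ℕ}
    (A B : EuclideanSpace ℝ (Fin n) →L[ℝ] EuclideanSpace ℝ (Fin N)) : ℝ :=
  ∑ i : Fin n, ⟪A (EuclideanSpace.single i 1), B (EuclideanSpace.single i 1)⟫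

/-- The Frobenius norm `‖A‖_F = ⟪A, A⟫_F^{1/2}`. -/
noncomputable def frobNorm {n N : ℕ}
    (A : EuclideanSpace ℝ (Fin n) →L[ℝ] EuclideanSpace ℝ (Fin N)) : ℝ :=
  Real.sqrt (frobInner A A)

/-! Away from the sphere `‖a‖ = λ` the map `S_λ` is differentiable at `a`, with derivative
`T = 0` inside the ball and `T = P + (1 - λ / ‖a‖) (1 - P)` outside it, `P` being the
orthogonal projection onto `ℝ a`. In both cases `T` is firmly nonexpansive,
`‖T v‖² ≤ ⟪v, T v⟫`, which in turn forces `⟪v, T v⟫ ≤ ‖v‖²` since `‖v - T v‖² ≥ 0`.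
By the chain rule `H = T ∘ G`, and applying both inequalities to the columns `G eᵢ` and
summing gives the Frobenius inequalities. -/

section InnerProductSpace

variable {E : Type*} [NormedAddCommGroup E] [InnerProductSpace ℝ E]

theorem real_inner_le_norm_sq_of_norm_sq_le_inner {v w : E} (h : ‖w‖ ^ 2 ≤ ⟪v, w⟫) :
    ⟪v, w⟫ ≤ ‖v‖ ^ 2 := by
  linarith [norm_sub_sq_real v w, sq_nonneg ‖v - w‖]

theorem norm_sq_le_inner_one_sub_smul_one_sub_starProjection (K : Submodule ℝ E)
    [K.HasOrthogonalProjection] {s : ℝ} (hs₀ : 0 ≤ s) (hs₁ : s ≤ 1) (v : E) :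
    ‖(1 - s • (1 - K.starProjection)) v‖ ^ 2 ≤ ⟪v, (1 - s • (1 - K.starProjection)) v⟫ := by
  set T := 1 - s • (1 - K.starProjection)
  set q := v - K.starProjection v
  have hq : ⟪q, K.starProjection v⟫ = 0 :=
    K.starProjection_inner_eq_zero v _ (K.starProjection_apply_mem v)
  have hTv : T v = K.starProjection v + (1 - s) • q := by
    simp only [T, q, sub_apply, one_apply_eq_self, smul_apply]
    module
  have hvT : v - T v = s • q := by rw [hTv]; module
  -- `⟪v - T v, T v⟫ = s (1 - s) ‖q‖²` because `q` is orthogonal to `K`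
  have key : 0 ≤ ⟪v - T v, T v⟫ := by
    rw [hvT, hTv, inner_add_right, real_inner_smul_left, real_inner_smul_left, hq,
      real_inner_smul_right, real_inner_self_eq_norm_sq]
    have := mul_nonneg (mul_nonneg hs₀ (sub_nonneg.2 hs₁)) (sq_nonneg ‖q‖)
    linarith
  rw [inner_sub_left, real_inner_self_eq_norm_sq] at key
  linarith

theorem hasFDerivAt_norm {a : E} (ha : a ≠ 0) :
    HasFDerivAt (‖·‖) (‖a‖⁻¹ • innerSL ℝ a) a := by
  have h := (Real.hasDerivAt_sqrt (by positivity : ‖a‖ ^ 2 ≠ 0)).comp_hasFDerivAt a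
    (hasStrictFDerivAt_norm_sq a).hasFDerivAt
  have hsqrt : (fun y : E => √(‖y‖ ^ 2)) = (‖·‖) := funext fun y => Real.sqrt_sq (norm_nonneg y)
  rw [Function.comp_def, hsqrt, Real.sqrt_sq (norm_nonneg a)] at h
  refine h.congr_fderiv ?_
  ext v
  simp only [one_div, mul_inv_rev, smul_apply, coe_innerSL_apply, nsmul_eq_mul, Nat.cast_ofNat,
    smul_eq_mul]
  field_simp

theorem hasFDerivAt_inv_norm_smul {a : E} (ha : a ≠ 0) :
    HasFDerivAt (fun y : E => ‖y‖⁻¹ • y) (‖a‖⁻¹ • (1 - (ℝ ∙ a).starProjection)) a := by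
  have ha' : ‖a‖ ≠ 0 := norm_ne_zero_iff.2 ha
  have h := ((hasDerivAt_inv ha').comp_hasFDerivAt a (hasFDerivAt_norm ha)).smul
    (hasFDerivAt_id a)
  refine h.congr_fderiv ?_
  ext v
  simp only [Function.comp_apply, neg_smul, id_eq, add_apply, smul_apply,
    ContinuousLinearMap.id_apply, ContinuousLinearMap.smulRight_apply, neg_apply,
    coe_innerSL_apply, smul_eq_mul, sub_apply, one_apply_eq_self,
    Submodule.starProjection_singleton, Real.ringHom_apply]
  module

end InnerProductSpace

section Shorten

variable {N : ℕ} {lam : ℝ} {a : EuclideanSpace ℝ (Fin N)}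

theorem hasFDerivAt_shorten_of_norm_lt (h : ‖a‖ < lam) :
    HasFDerivAt (shorten lam) (0 : EuclideanSpace ℝ (Fin N) →L[ℝ] EuclideanSpace ℝ (Fin N)) a := by
  refine (hasFDerivAt_const 0 a).congr_of_eventuallyEq ?_
  filter_upwards [continuous_norm.continuousAt.eventually (eventually_lt_nhds h)] with y hy
  simp [shorten, hy.le]

theorem shorten_eq_sub_smul_inv_norm_smul (hlam : 0 ≤ lam) (h : lam < ‖a‖) :
    shorten lam a = a - lam • ‖a‖⁻¹ • a := by
  have ha : ‖a‖ ≠ 0 := (hlam.trans_lt h).ne'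
  rw [shorten, if_neg h.not_ge, sub_div, div_self ha, sub_smul, one_smul, smul_smul,
    div_eq_mul_inv]

theorem hasFDerivAt_shorten_of_lt_norm (hlam : 0 ≤ lam) (h : lam < ‖a‖) :
    HasFDerivAt (shorten lam) (1 - (lam / ‖a‖) • (1 - (ℝ ∙ a).starProjection)) a := by
  have ha : a ≠ 0 := norm_pos_iff.1 (hlam.trans_lt h)
  have hderiv := (hasFDerivAt_id a).sub ((hasFDerivAt_inv_norm_smul ha).const_smul lam)
  refine (hderiv.congr_of_eventuallyEq ?_).congr_fderiv ?_
  · filter_upwards [continuous_norm.continuousAt.eventually (eventually_gt_nhds h)] with y hy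
    exact shorten_eq_sub_smul_inv_norm_smul hlam hy
  · rw [ContinuousLinearMap.one_def, smul_smul, div_eq_mul_inv]

theorem exists_hasFDerivAt_shorten (hlam : 0 ≤ lam) (h : ‖a‖ ≠ lam) :
    ∃ T : EuclideanSpace ℝ (Fin N) →L[ℝ] EuclideanSpace ℝ (Fin N),
      HasFDerivAt (shorten lam) T a ∧ ∀ v, ‖T v‖ ^ 2 ≤ ⟪v, T v⟫ := by
  rcases h.lt_or_gt with hlt | hgt
  · exact ⟨0, hasFDerivAt_shorten_of_norm_lt hlt, fun v => by simp⟩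
  · refine ⟨_, hasFDerivAt_shorten_of_lt_norm hlam hgt,
      norm_sq_le_inner_one_sub_smul_one_sub_starProjection _ (by positivity) ?_⟩
    exact div_le_one_of_le₀ hgt.le (hlam.trans hgt.le)

end Shorten

section Frobenius

variable {n N : ℕ}

theorem frobNorm_sq (A : EuclideanSpace ℝ (Fin n) →L[ℝ] EuclideanSpace ℝ (Fin N)) :
    frobNorm A ^ 2 = ∑ i : Fin n, ‖A (EuclideanSpace.single i 1)‖ ^ 2 := by
  simp only [frobNorm, frobInner, real_inner_self_eq_norm_sq]
  exact Real.sq_sqrt (by positivity)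

variable {T : EuclideanSpace ℝ (Fin N) →L[ℝ] EuclideanSpace ℝ (Fin N)}

theorem frobNorm_comp_sq_le_frobInner (hT : ∀ v, ‖T v‖ ^ 2 ≤ ⟪v, T v⟫)
    (G : EuclideanSpace ℝ (Fin n) →L[ℝ] EuclideanSpace ℝ (Fin N)) :
    frobNorm (T.comp G) ^ 2 ≤ frobInner G (T.comp G) := by
  rw [frobNorm_sq]
  exact Finset.sum_le_sum fun i _ => hT _

theorem frobInner_comp_le_frobNorm_sq (hT : ∀ v, ‖T v‖ ^ 2 ≤ ⟪v, T v⟫)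
    (G : EuclideanSpace ℝ (Fin n) →L[ℝ] EuclideanSpace ℝ (Fin N)) :
    frobInner G (T.comp G) ≤ frobNorm G ^ 2 := by
  rw [frobNorm_sq]
  exact Finset.sum_le_sum fun i _ => real_inner_le_norm_sq_of_norm_sq_le_inner (hT _)

end Frobenius

/-- Let `λ > 0` and let `f : ℝ^n → ℝ^N` be differentiable at `x` with
`‖f x‖ ≠ λ`. Then `S_λ ∘ f` is differentiable at `x` and, with `G = Df(x)` and
`H = D(S_λ ∘ f)(x)`, one has `‖H‖_F² ≤ ⟪G, H⟫_F ≤ ‖G‖_F²`. -/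
theorem shorten_comp_differentiable_frobenius {n N : ℕ} (lam : ℝ) (hlam : 0 < lam)
    (f : EuclideanSpace ℝ (Fin n) → EuclideanSpace ℝ (Fin N))
    (x : EuclideanSpace ℝ (Fin n))
    (hf : DifferentiableAt ℝ f x) (hne : ‖f x‖ ≠ lam) :
    DifferentiableAt ℝ (fun y => shorten lam (f y)) x ∧
    frobNorm (fderiv ℝ (fun y => shorten lam (f y)) x) ^ 2 ≤
      frobInner (fderiv ℝ f x) (fderiv ℝ (fun y => shorten lam (f y)) x) ∧
    frobInner (fderiv ℝ f x) (fderiv ℝ (fun y => shorten lam (f y)) x) ≤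
      frobNorm (fderiv ℝ f x) ^ 2 := by
  obtain ⟨T, hT, hT_firm⟩ := exists_hasFDerivAt_shorten hlam.le hne
  have hH : HasFDerivAt (fun y => shorten lam (f y)) (T.comp (fderiv ℝ f x)) x :=
    hT.comp x hf.hasFDerivAt
  rw [hH.fderiv]
  exact ⟨hH.differentiableAt, frobNorm_comp_sq_le_frobInner hT_firm _,
    frobInner_comp_le_frobNorm_sq hT_firm _⟩
end

section
/- Let φ be an N-function with right derivative φ', and suppose 1 < p ≤ q < ∞ are such that p ≤ φ'(t)t/φ(t) ≤ q for all t > 0. Then for every ε > 0 there exists a constant C_ε > 0, depending only on ε, p and q, such that φ'(s) t ≤ C_ε φ(s) + ε φ(t) for all s, t ≥ 0. -/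
open Filter Set intervalIntegral

/-- An N-function together with its right derivative `φ'`: `φ : [0,∞) → [0,∞)` is convex,
left-continuous, `φ(0) = 0`, `φ(t)/t → 0` as `t → 0⁺` and `φ(t)/t → ∞` as `t → ∞`;
`φ'` is its nondecreasing nonnegative right derivative with `φ(t) = ∫₀ᵗ φ'(s) ds`. -/
structure IsNFunction (φ φ' : ℝ → ℝ) : Prop where
  nonneg : ∀ t, 0 ≤ t → 0 ≤ φ t
  convexOn : ConvexOn ℝ (Set.Ici (0 : ℝ)) φ
  leftContinuous : ∀ t : ℝ, 0 < t → ContinuousWithinAt φ (Set.Iic t) t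
  map_zero : φ 0 = 0
  tendsto_zero : Filter.Tendsto (fun t => φ t / t) (nhdsWithin 0 (Set.Ioi 0)) (nhds 0)
  tendsto_atTop : Filter.Tendsto (fun t => φ t / t) Filter.atTop Filter.atTop
  deriv_nonneg : ∀ t, 0 ≤ t → 0 ≤ φ' t
  deriv_mono : ∀ s t, 0 ≤ s → s ≤ t → φ' s ≤ φ' t
  eq_integral : ∀ t : ℝ, 0 < t → φ t = ∫ s in (0 : ℝ)..t, φ' s

/-- The conjugate N-function `φ*(s) = sup_{t ≥ 0} (s t − φ(t))`. -/
noncomputable def conjNFunction (φ : ℝ → ℝ) (s : ℝ) : ℝ :=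
  sSup ((fun t => s * t - φ t) '' Set.Ici (0 : ℝ))

/-!
The lower index gives the doubling-type bound `(1 + p) φ(u) ≤ φ(2u)`, since
`φ(2u) - φ(u) = ∫_u^{2u} φ' ≥ φ'(u) u ≥ p φ(u)`; iterating, `φ(t / 2ⁿ) ≤ φ(t) / (1 + p)ⁿ`.
The upper index gives the crude Young inequality `φ'(a) b ≤ q (φ(a) + φ(b))`, by comparing
`φ'(a) b` with `φ'(max a b) max a b`. Applying it to `a = s`, `b = t / 2ⁿ` and rescaling by `2ⁿ`,
the coefficient of `φ(t)` becomes `q (2 / (1 + p))ⁿ`, which is below `ε` for `n` large.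
-/

namespace IsNFunction

variable {φ φ' : ℝ → ℝ} (hφ : IsNFunction φ φ')
include hφ

theorem intervalIntegrable_deriv {a b : ℝ} (ha : 0 ≤ a) (hb : 0 ≤ b) :
    IntervalIntegrable φ' MeasureTheory.volume a b :=
  MonotoneOn.intervalIntegrable fun x hx y _ hxy =>
    hφ.deriv_mono x y ((le_min ha hb).trans hx.1) hxy

theorem eq_integral_of_nonneg {t : ℝ} (ht : 0 ≤ t) : φ t = ∫ s in (0 : ℝ)..t, φ' s := by
  rcases ht.eq_or_lt with rfl | ht
  · simp [hφ.map_zero]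
  · exact hφ.eq_integral t ht

theorem deriv_mul_sub_le_sub {a b : ℝ} (ha : 0 ≤ a) (hab : a ≤ b) :
    φ' a * (b - a) ≤ φ b - φ a := by
  have hb : 0 ≤ b := ha.trans hab
  have hdiff : φ b - φ a = ∫ s in a..b, φ' s := by
    rw [hφ.eq_integral_of_nonneg hb, hφ.eq_integral_of_nonneg ha,
      integral_interval_sub_left (hφ.intervalIntegrable_deriv le_rfl hb)
        (hφ.intervalIntegrable_deriv le_rfl ha)]
  calc φ' a * (b - a) = ∫ _ in a..b, φ' a := by simp [mul_comm]
    _ ≤ ∫ s in a..b, φ' s :=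
      integral_mono_on hab intervalIntegrable_const (hφ.intervalIntegrable_deriv ha hb)
        fun s hs => hφ.deriv_mono a s ha hs.1
    _ = φ b - φ a := hdiff.symm

theorem pos_of_le_deriv_mul_div {p : ℝ} (hp : 0 < p)
    (hlow : ∀ t, 0 < t → p ≤ φ' t * t / φ t) {t : ℝ} (ht : 0 < t) : 0 < φ t := by
  refine (hφ.nonneg t ht.le).lt_of_ne fun h => ?_
  have := hlow t ht
  rw [← h, div_zero] at this
  linarith

theorem mul_le_deriv_mul_le_mul {p q : ℝ} (hp : 0 < p)
    (hidx : ∀ t, 0 < t → p ≤ φ' t * t / φ t ∧ φ' t * t / φ t ≤ q) {t : ℝ} (ht : 0 ≤ t) :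
    p * φ t ≤ φ' t * t ∧ φ' t * t ≤ q * φ t := by
  rcases ht.eq_or_lt with rfl | ht
  · simp [hφ.map_zero]
  have hpos := hφ.pos_of_le_deriv_mul_div hp (fun t ht => (hidx t ht).1) ht
  exact ⟨(le_div_iff₀ hpos).mp (hidx t ht).1, (div_le_iff₀ hpos).mp (hidx t ht).2⟩

theorem one_add_mul_le_two_mul {p u : ℝ} (hu : 0 ≤ u) (hlow : p * φ u ≤ φ' u * u) :
    (1 + p) * φ u ≤ φ (2 * u) := by
  have := hφ.deriv_mul_sub_le_sub hu (by linarith : u ≤ 2 * u)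
  rw [show 2 * u - u = u by ring] at this
  linarith

theorem one_add_pow_mul_le {p : ℝ} (hp : 0 ≤ p) (hlow : ∀ t, 0 ≤ t → p * φ t ≤ φ' t * t)
    (n : ℕ) {u : ℝ} (hu : 0 ≤ u) : (1 + p) ^ n * φ u ≤ φ (2 ^ n * u) := by
  induction n with
  | zero => simp
  | succ n ih =>
    have hnu : 0 ≤ 2 ^ n * u := by positivity
    calc (1 + p) ^ (n + 1) * φ u = (1 + p) * ((1 + p) ^ n * φ u) := by ring
      _ ≤ (1 + p) * φ (2 ^ n * u) := by gcongr
      _ ≤ φ (2 * (2 ^ n * u)) := hφ.one_add_mul_le_two_mul hnu (hlow _ hnu)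
      _ = φ (2 ^ (n + 1) * u) := by rw [pow_succ]; ring_nf

theorem deriv_mul_le {q a b : ℝ} (hq : 0 ≤ q) (hup : ∀ t, 0 ≤ t → φ' t * t ≤ q * φ t)
    (ha : 0 ≤ a) (hb : 0 ≤ b) : φ' a * b ≤ q * φ a + q * φ b := by
  have hφa : 0 ≤ q * φ a := mul_nonneg hq (hφ.nonneg a ha)
  have hφb : 0 ≤ q * φ b := mul_nonneg hq (hφ.nonneg b hb)
  rcases le_total b a with hba | hab
  · calc φ' a * b ≤ φ' a * a := by gcongr; exact hφ.deriv_nonneg a ha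
      _ ≤ q * φ a + q * φ b := by linarith [hup a ha]
  · calc φ' a * b ≤ φ' b * b := by gcongr; exact hφ.deriv_mono a b ha hab
      _ ≤ q * φ a + q * φ b := by linarith [hup b hb]

theorem deriv_mul_le_pow {p q : ℝ} (hp : 0 ≤ p) (hq : 0 ≤ q)
    (hlow : ∀ t, 0 ≤ t → p * φ t ≤ φ' t * t) (hup : ∀ t, 0 ≤ t → φ' t * t ≤ q * φ t)
    (n : ℕ) {s t : ℝ} (hs : 0 ≤ s) (ht : 0 ≤ t) :
    φ' s * t ≤ 2 ^ n * q * φ s + q * (2 / (1 + p)) ^ n * φ t := by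
  have h2n : (0 : ℝ) < 2 ^ n := by positivity
  have hpn : (0 : ℝ) < (1 + p) ^ n := by positivity
  have hscaled : 0 ≤ t / 2 ^ n := by positivity
  have hhalved : φ (t / 2 ^ n) ≤ φ t / (1 + p) ^ n := by
    rw [le_div_iff₀' hpn]
    simpa [mul_div_cancel₀ t h2n.ne'] using hφ.one_add_pow_mul_le hp hlow n hscaled
  calc φ' s * t = 2 ^ n * (φ' s * (t / 2 ^ n)) := by field_simp
    _ ≤ 2 ^ n * (q * φ s + q * φ (t / 2 ^ n)) := by
      gcongr; exact hφ.deriv_mul_le hq hup hs hscaled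
    _ ≤ 2 ^ n * (q * φ s + q * (φ t / (1 + p) ^ n)) := by gcongr
    _ = 2 ^ n * q * φ s + q * (2 / (1 + p)) ^ n * φ t := by rw [div_pow]; ring

end IsNFunction

/-- If `φ` is an N-function with Simonenko indices `p ≤ q`
(`1 < p ≤ q < ∞`, `p ≤ φ'(t)t/φ(t) ≤ q` for all `t > 0`), then for every `ε > 0` there is
a constant `C_ε > 0`, depending only on `ε`, `p` and `q`, such that
`φ'(s) t ≤ C_ε φ(s) + ε φ(t)` for all `s, t ≥ 0`. -/
theorem nfunction_young_with_deriv (p q : ℝ) (hp : 1 < p) (hpq : p ≤ q) :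
    ∀ ε : ℝ, 0 < ε → ∃ C : ℝ, 0 < C ∧
      ∀ φ φ' : ℝ → ℝ, IsNFunction φ φ' →
        (∀ t : ℝ, 0 < t → p ≤ φ' t * t / φ t ∧ φ' t * t / φ t ≤ q) →
        ∀ s t : ℝ, 0 ≤ s → 0 ≤ t → φ' s * t ≤ C * φ s + ε * φ t := by
  intro ε hε
  have hq : 0 < q := by linarith
  obtain ⟨n, hn⟩ : ∃ n : ℕ, (2 / (1 + p)) ^ n < ε / q :=
    exists_pow_lt_of_lt_one (by positivity) (by rw [div_lt_one (by linarith)]; linarith)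
  refine ⟨2 ^ n * q, by positivity, fun φ φ' hφ hidx s t hs ht => ?_⟩
  have hbounds {t : ℝ} (ht : 0 ≤ t) := hφ.mul_le_deriv_mul_le_mul (by linarith) hidx ht
  calc φ' s * t ≤ 2 ^ n * q * φ s + q * (2 / (1 + p)) ^ n * φ t :=
        hφ.deriv_mul_le_pow (by linarith) hq.le (fun _ ht => (hbounds ht).1)
          (fun _ ht => (hbounds ht).2) n hs ht
    _ ≤ 2 ^ n * q * φ s + ε * φ t := by
      gcongr
      · exact hφ.nonneg t ht
      · exact (lt_div_iff₀' hq).mp hn |>.le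
end
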